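/- arXiv:2602.17358 — 8 statements merged into one kernel-verified Lean document; each statement's English description precedes it below -/
import Mathlib

section
/- Fix α ∈ (0,1]. Let X_1 = 1 almost surely and let X_2 take value 1/α with probability α and 0 otherwise, with X_1, X_2 independent. Then E[max(X_1, X_2)] = 2 − α, E[X_2] = 1, and for every γ ∈ [0,1] one has γ·E[X_1] + (1−γ)·E[X_2] = 1 = (1/(2−α))·E[max(X_1, X_2)]; hence no rule that either accepts X_1 (with some probability γ) or else takes X_2 can obtain expected value exceeding (1/(2−α))·E[max(X_1, X_2)] on this instance. -/
open MeasureTheory ProbabilityTheory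

/-- `pick v t` returns `v i` for the least index `i` with `v i ≥ t`, and `0` if no
such index exists. -/
noncomputable def pick {n : ℕ} (v : Fin n → ℝ) (t : ℝ) : ℝ :=
  if h : (Finset.univ.filter (fun i => t ≤ v i)).Nonempty then
    v ((Finset.univ.filter (fun i => t ≤ v i)).min' h)
  else 0

/-- The realized maximum `M(X)(ω) = max_i X_i(ω)` of an instance. -/
noncomputable def instMax {Ω : Type*} {n : ℕ} (X : Fin n → Ω → ℝ) (ω : Ω) : ℝ :=
  ⨆ i, X i ω

/-- `OPT(X) = E[max_i X_i]`. -/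
noncomputable def OPT {Ω : Type*} {m : MeasurableSpace Ω} (μ : Measure Ω) {n : ℕ}
    (X : Fin n → Ω → ℝ) : ℝ :=
  ∫ ω, instMax X ω ∂μ

/-- `TAL(X, τ) = E[pick((X_1,…,X_n), τ)]`: the expected value of the threshold
algorithm with threshold `τ`. -/
noncomputable def TAL {Ω : Type*} {m : MeasurableSpace Ω} (μ : Measure Ω) {n : ℕ}
    (X : Fin n → Ω → ℝ) (τ : ℝ) : ℝ :=
  ∫ ω, pick (fun i => X i ω) τ ∂μ

/-- `TAL_α(X, τ) = E[pick((X_1,…,X_n), max(τ, α·M))]`: the expected value of the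
prediction-augmented threshold algorithm with base threshold `τ` and prediction
quality `α`. -/
noncomputable def TALpred {Ω : Type*} {m : MeasurableSpace Ω} (μ : Measure Ω) (α : ℝ)
    {n : ℕ} (X : Fin n → Ω → ℝ) (τ : ℝ) : ℝ :=
  ∫ ω, pick (fun i => X i ω) (max τ (α * instMax X ω)) ∂μ

/-- The SC-threshold `η(I) = sup{τ ≥ 0 : TAL(I, τ) ≥ τ}`. -/
noncomputable def SCthreshold {Ω : Type*} {m : MeasurableSpace Ω} (μ : Measure Ω)
    {n : ℕ} (X : Fin n → Ω → ℝ) : ℝ :=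
  sSup {τ : ℝ | 0 ≤ τ ∧ τ ≤ TAL μ X τ}

/-- In the two-variable instance with `X₁ = 1` a.s. and `X₂ = 1/α` with probability `α`
(and `0` otherwise), independent: `E[max(X₁,X₂)] = 2 − α`, `E[X₂] = 1`, and every rule
that accepts `X₁` with probability `γ` and otherwise takes `X₂` obtains expected value
`γ·E[X₁] + (1−γ)·E[X₂] = 1 = (1/(2−α))·E[max(X₁,X₂)]`. -/
theorem stmt1 {Ω : Type*} [MeasurableSpace Ω] (μ : Measure Ω) [IsProbabilityMeasure μ]
    (α : ℝ) (hα : α ∈ Set.Ioc (0 : ℝ) 1)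
    (X₁ X₂ : Ω → ℝ) (hmeas₁ : Measurable X₁) (hmeas₂ : Measurable X₂)
    (hindep : IndepFun X₁ X₂ μ)
    (hX₁ : ∀ᵐ ω ∂μ, X₁ ω = 1)
    (hX₂ : ∀ ω, X₂ ω = 1 / α ∨ X₂ ω = 0)
    (hp : μ {ω | X₂ ω = 1 / α} = ENNReal.ofReal α) :
    (∫ ω, max (X₁ ω) (X₂ ω) ∂μ) = 2 - α ∧
    (∫ ω, X₂ ω ∂μ) = 1 ∧
    ∀ γ ∈ Set.Icc (0 : ℝ) 1,
      γ * (∫ ω, X₁ ω ∂μ) + (1 - γ) * (∫ ω, X₂ ω ∂μ) = 1 ∧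
      (1 : ℝ) = (1 / (2 - α)) * ∫ ω, max (X₁ ω) (X₂ ω) ∂μ := by
  obtain ⟨hα0, hα1⟩ := hα
  have hA : MeasurableSet {ω | X₂ ω = 1 / α} := hmeas₂ (measurableSet_singleton _)
  set A := {ω | X₂ ω = 1 / α} with hAdef
  have hμA : (μ A).toReal = α := by rw [hp, ENNReal.toReal_ofReal hα0.le]
  have h1α : (1:ℝ) ≤ 1 / α := by rw [le_div_iff₀ hα0]; linarith
  have hX2eq : X₂ = A.indicator (fun _ => 1 / α) := by
    funext ω
    by_cases h : ω ∈ A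
    · rw [Set.indicator_of_mem h]; exact h
    · rw [Set.indicator_of_notMem h]
      rcases hX₂ ω with h' | h'
      · exact absurd h' h
      · exact h'
  have hintX2 : (∫ ω, X₂ ω ∂μ) = 1 := by
    rw [hX2eq, integral_indicator_const (1/α : ℝ) hA, smul_eq_mul, measureReal_def, hμA]
    field_simp
  have hintX1 : (∫ ω, X₁ ω ∂μ) = 1 := by
    rw [integral_congr_ae hX₁]
    simp
  have hmax : (fun ω => max (X₁ ω) (X₂ ω)) =ᵐ[μ]
      fun ω => A.indicator (fun _ => 1 / α - 1) ω + 1 := by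
    filter_upwards [hX₁] with ω h1
    rw [h1]
    by_cases h : ω ∈ A
    · rw [Set.indicator_of_mem h]
      have : X₂ ω = 1 / α := h
      rw [this, max_eq_right h1α]; ring
    · rw [Set.indicator_of_notMem h]
      rcases hX₂ ω with h' | h'
      · exact absurd h' h
      · rw [h', max_eq_left (by norm_num)]; ring
  have hintmax : (∫ ω, max (X₁ ω) (X₂ ω) ∂μ) = 2 - α := by
    rw [integral_congr_ae hmax,
      integral_add ((integrable_const _).indicator hA) (integrable_const 1),
      integral_indicator_const _ hA, smul_eq_mul, measureReal_def, hμA, integral_const]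
    simp only [measureReal_def, measure_univ, ENNReal.toReal_one, one_smul, smul_eq_mul]
    field_simp
    ring
  refine ⟨hintmax, hintX2, fun γ _ => ⟨by rw [hintX1, hintX2]; ring, ?_⟩⟩
  rw [hintmax]
  field_simp
  exact (div_self (by linarith : (0:ℝ) < 2 - α).ne').symm
end

section
/- Let I be a sorted scaled Bernoulli instance and let 1 ≤ k ≤ n−1. If v_k > η(I), then TAL(I, v_k) ≥ TAL(I, v_{k+1}). -/
open MeasureTheory ProbabilityTheory

section PickAux

variable {n : ℕ}

lemma pick_congr {u w : Fin n → ℝ} {t s : ℝ}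
    (hf : ∀ i, t ≤ u i ↔ s ≤ w i) (hv : ∀ i, t ≤ u i → u i = w i) :
    pick u t = pick w s := by
  classical
  have hset : (Finset.univ.filter fun i => t ≤ u i)
      = (Finset.univ.filter fun i => s ≤ w i) := by
    ext i; simp [hf i]
  unfold pick
  by_cases h : (Finset.univ.filter fun i => t ≤ u i).Nonempty
  · have h' : (Finset.univ.filter fun i => s ≤ w i).Nonempty := hset ▸ h
    rw [dif_pos h, dif_pos h']
    have hmem := Finset.min'_mem _ h
    have : (Finset.univ.filter fun i => t ≤ u i).min' h
        = (Finset.univ.filter fun i => s ≤ w i).min' h' := by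
      congr 1
    rw [← this]
    exact hv _ (Finset.mem_filter.1 hmem).2
  · have h' : ¬ (Finset.univ.filter fun i => s ≤ w i).Nonempty := hset ▸ h
    rw [dif_neg h, dif_neg h']

lemma pick_ge {u : Fin n → ℝ} {t : ℝ} (h : ∃ i, t ≤ u i) : t ≤ pick u t := by
  classical
  obtain ⟨i, hi⟩ := h
  have hne : (Finset.univ.filter fun i => t ≤ u i).Nonempty :=
    ⟨i, Finset.mem_filter.2 ⟨Finset.mem_univ _, hi⟩⟩
  rw [pick, dif_pos hne]
  exact (Finset.mem_filter.1 (Finset.min'_mem _ hne)).2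

lemma pick_cases (u : Fin n → ℝ) (t : ℝ) : pick u t = 0 ∨ ∃ i, pick u t = u i := by
  classical
  unfold pick
  by_cases h : (Finset.univ.filter fun i => t ≤ u i).Nonempty
  · exact Or.inr ⟨_, by rw [dif_pos h]⟩
  · exact Or.inl (by rw [dif_neg h])

lemma pick_eq_sum (v : Fin n → ℝ) (t : ℝ) :
    pick v t = ∑ i, if (t ≤ v i ∧ ∀ j, j < i → ¬ t ≤ v j) then v i else 0 := by
  classical
  by_cases h : (Finset.univ.filter fun i => t ≤ v i).Nonempty
  · set m := (Finset.univ.filter fun i => t ≤ v i).min' h with hm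
    have hmmem : m ∈ Finset.univ.filter fun i => t ≤ v i := Finset.min'_mem _ h
    have hmle : t ≤ v m := (Finset.mem_filter.1 hmmem).2
    have hiff : ∀ i : Fin n, (t ≤ v i ∧ ∀ j, j < i → ¬ t ≤ v j) ↔ i = m := by
      intro i
      constructor
      · rintro ⟨hi, hmin⟩
        by_contra hne
        have himem : i ∈ Finset.univ.filter fun i => t ≤ v i :=
          Finset.mem_filter.2 ⟨Finset.mem_univ _, hi⟩
        have h1 : m ≤ i := Finset.min'_le _ _ himem
        have h2 : m < i := lt_of_le_of_ne h1 (fun hh => hne hh.symm)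
        exact hmin m h2 hmle
      · rintro rfl
        refine ⟨hmle, fun j hj hjle => ?_⟩
        have : m ≤ j := Finset.min'_le (Finset.univ.filter fun i => t ≤ v i) j (Finset.mem_filter.2 ⟨Finset.mem_univ _, hjle⟩)
        exact absurd hj (not_lt.2 this)
    rw [pick, dif_pos h]
    calc v m = ∑ i, if i = m then v i else 0 := by rw [Finset.sum_ite_eq' Finset.univ m v]; simp
      _ = _ := by refine Finset.sum_congr rfl fun i _ => ?_; rw [if_congr (hiff i).symm rfl rfl]
  · rw [pick, dif_neg h]
    symm
    refine Finset.sum_eq_zero fun i _ => ?_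
    rw [if_neg]
    rintro ⟨hi, -⟩
    exact h ⟨i, Finset.mem_filter.2 ⟨Finset.mem_univ _, hi⟩⟩

lemma measurable_pick (t : ℝ) : Measurable (fun v : Fin n → ℝ => pick v t) := by
  classical
  have : (fun v : Fin n → ℝ => pick v t)
      = fun v => ∑ i, if (t ≤ v i ∧ ∀ j, j < i → ¬ t ≤ v j) then v i else 0 := by
    funext v; exact pick_eq_sum v t
  rw [this]
  refine Finset.measurable_sum _ fun i _ => ?_
  have hs : MeasurableSet {v : Fin n → ℝ | t ≤ v i ∧ ∀ j, j < i → ¬ t ≤ v j} := by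
    have : {v : Fin n → ℝ | t ≤ v i ∧ ∀ j, j < i → ¬ t ≤ v j}
        = {v : Fin n → ℝ | t ≤ v i} ∩ ⋂ (j : Fin n) (_ : j < i), {v | v j < t} := by
      ext v; simp [Set.mem_iInter, not_le]
    rw [this]
    refine ((measurable_pi_apply i) measurableSet_Ici).inter ?_
    exact MeasurableSet.iInter fun j => MeasurableSet.iInter fun _ =>
      (measurable_pi_apply j) measurableSet_Iio
  exact Measurable.ite hs (measurable_pi_apply i) measurable_const

end PickAux

/-- For a sorted scaled Bernoulli instance, if `v_k > η(I)` then
`TAL(I, v_k) ≥ TAL(I, v_{k+1})`. -/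
theorem stmt4 {Ω : Type*} [MeasurableSpace Ω] (μ : Measure Ω) [IsProbabilityMeasure μ]
    {n : ℕ} (X : Fin n → Ω → ℝ) (v p : Fin n → ℝ)
    (hmeas : ∀ i, Measurable (X i))
    (hindep : iIndepFun X μ)
    (hv0 : ∀ i, 0 ≤ v i) (hsorted : Monotone v)
    (hBer : ∀ i ω, X i ω = v i ∨ X i ω = 0)
    (hprob : ∀ i, μ {ω | X i ω = v i} = ENNReal.ofReal (p i))
    (hint : Integrable (instMax X) μ)
    (k : ℕ) (hk : k + 1 < n)
    (hvk : SCthreshold μ X < v ⟨k, by omega⟩) :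
    TAL μ X (v ⟨k + 1, hk⟩) ≤ TAL μ X (v ⟨k, by omega⟩) := by
  classical
  set τ : ℝ := v ⟨k, by omega⟩ with hτdef
  set τ' : ℝ := v ⟨k + 1, hk⟩ with hτ'def
  have hττ' : τ ≤ τ' := hsorted (Fin.mk_le_mk.mpr (Nat.le_succ k))
  have hX0 : ∀ i ω, 0 ≤ X i ω := by
    intro i ω; rcases hBer i ω with h | h <;> simp [h, hv0 i]
  have hXle : ∀ i ω, X i ω ≤ v i := by
    intro i ω; rcases hBer i ω with h | h <;> simp [h, hv0 i]
  have hmeasp : ∀ t : ℝ, Measurable (fun ω => pick (fun i => X i ω) t) := fun t =>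
    (measurable_pick t).comp (measurable_pi_lambda _ hmeas)
  set C : ℝ := ∑ i, v i with hC
  have hC0 : 0 ≤ C := Finset.sum_nonneg fun i _ => hv0 i
  have hpick_nonneg : ∀ (t : ℝ) ω, 0 ≤ pick (fun i => X i ω) t := by
    intro t ω
    rcases pick_cases (fun i => X i ω) t with h | ⟨i, h⟩
    · rw [h]
    · rw [h]; exact hX0 i ω
  have hpick_le : ∀ (t : ℝ) ω, pick (fun i => X i ω) t ≤ C := by
    intro t ω
    rcases pick_cases (fun i => X i ω) t with h | ⟨i, h⟩
    · rw [h]; exact hC0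
    · rw [h]
      exact le_trans (hXle i ω)
        (Finset.single_le_sum (fun j _ => hv0 j) (Finset.mem_univ i))
  have hIntPick : ∀ t : ℝ, Integrable (fun ω => pick (fun i => X i ω) t) μ := by
    intro t
    refine Integrable.mono' (integrable_const C) (hmeasp t).aestronglyMeasurable
      (ae_of_all _ fun ω => ?_)
    rw [Real.norm_eq_abs, abs_of_nonneg (hpick_nonneg t ω)]
    exact hpick_le t ω
  have hn0 : 0 < n := by omega
  have hbddmax : ∀ ω, BddAbove (Set.range fun i => X i ω) := fun ω =>
    Set.Finite.bddAbove (Set.finite_range _)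
  have hpick_le_max : ∀ (t : ℝ) ω, pick (fun i => X i ω) t ≤ instMax X ω := by
    intro t ω
    have h0max : X ⟨0, hn0⟩ ω ≤ instMax X ω := le_ciSup (hbddmax ω) _
    rcases pick_cases (fun i => X i ω) t with h | ⟨i, h⟩
    · rw [h]; exact le_trans (hX0 _ ω) h0max
    · rw [h]; exact le_ciSup (hbddmax ω) i
  have hTALle : ∀ t : ℝ, TAL μ X t ≤ ∫ ω, instMax X ω ∂μ := fun t =>
    integral_mono (hIntPick t) hint (fun ω => hpick_le_max t ω)
  have hbddS : BddAbove {t : ℝ | 0 ≤ t ∧ t ≤ TAL μ X t} :=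
    ⟨∫ ω, instMax X ω ∂μ, fun x hx => hx.2.trans (hTALle x)⟩
  have h0mem : (0:ℝ) ∈ {t : ℝ | 0 ≤ t ∧ t ≤ TAL μ X t} :=
    ⟨le_refl 0, integral_nonneg fun ω => hpick_nonneg 0 ω⟩
  have hτpos : 0 < τ := lt_of_le_of_lt (le_csSup hbddS h0mem) hvk
  have hτ'pos : 0 < τ' := lt_of_lt_of_le hτpos hττ'
  have hTALτ : TAL μ X τ < τ := by
    by_contra hcon
    exact absurd (le_csSup hbddS ⟨hτpos.le, not_lt.1 hcon⟩) (not_le.2 hvk)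
  -- index sets
  set S : Finset (Fin n) := Finset.univ.filter (fun i => τ' ≤ v i) with hS
  set L : Finset (Fin n) := Finset.univ.filter (fun i => τ ≤ v i ∧ v i < τ') with hL
  have hdisj : Disjoint L S := by
    rw [Finset.disjoint_left]
    intro i hiL hiS
    rw [hL, Finset.mem_filter] at hiL
    rw [hS, Finset.mem_filter] at hiS
    exact absurd hiS.2 (not_le.2 hiL.2.2)
  set FL : (↥L → ℝ) → ℝ :=
    fun y => if ∃ i : ↥L, τ ≤ y i ∧ y i < τ' then 1 else 0 with hFL
  set G : (↥S → ℝ) → ℝ :=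
    fun y => pick (fun i => if h : i ∈ S then y ⟨i, h⟩ else 0) τ' with hG
  set Fc : Ω → ℝ := FL ∘ (fun ω (i : ↥L) => X i ω) with hFc
  set Gc : Ω → ℝ := G ∘ (fun ω (i : ↥S) => X i ω) with hGc
  have hsetL : MeasurableSet {y : ↥L → ℝ | ∃ i : ↥L, τ ≤ y i ∧ y i < τ'} := by
    have : {y : ↥L → ℝ | ∃ i : ↥L, τ ≤ y i ∧ y i < τ'}
        = ⋃ i : ↥L, (fun y : ↥L → ℝ => y i) ⁻¹' (Set.Ico τ τ') := by
      ext y; simp [Set.mem_Ico]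
    rw [this]
    exact MeasurableSet.iUnion fun i => (measurable_pi_apply i) measurableSet_Ico
  have hmFL : Measurable FL := Measurable.ite hsetL measurable_const measurable_const
  have hmG : Measurable G := by
    refine (measurable_pick τ').comp (measurable_pi_lambda _ fun i => ?_)
    by_cases h : i ∈ S
    · simp only [dif_pos h]; exact measurable_pi_apply _
    · simp only [dif_neg h]; exact measurable_const
  have hindepFG : IndepFun Fc Gc μ :=
    (hindep.indepFun_finset L S hdisj hmeas).comp hmFL hmG
  have hmFc : Measurable Fc := hmFL.comp (measurable_pi_lambda _ fun i => hmeas i)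
  have hmGc : Measurable Gc := hmG.comp (measurable_pi_lambda _ fun i => hmeas i)
  have hGc_eq : ∀ ω, pick (fun i => X i ω) τ' = Gc ω := by
    intro ω
    have : Gc ω = pick (fun i => if h : i ∈ S then X i ω else 0) τ' := rfl
    rw [this]
    refine pick_congr (fun i => ?_) (fun i hi => ?_)
    · by_cases h : i ∈ S
      · simp [dif_pos h]
      · have hvi : v i < τ' := by
          rw [hS, Finset.mem_filter] at h; push_neg at h
          exact h (Finset.mem_univ _)
        rw [dif_neg h]
        constructor
        · intro hle; exact absurd (lt_of_le_of_lt (le_trans hle (hXle i ω)) hvi) (lt_irrefl _)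
        · intro hle; exact absurd (lt_of_le_of_lt hle hτ'pos) (lt_irrefl _)
    · by_cases h : i ∈ S
      · rw [dif_pos h]
      · have hvi : v i < τ' := by
          rw [hS, Finset.mem_filter] at h; push_neg at h
          exact h (Finset.mem_univ _)
        exact absurd (lt_of_le_of_lt (le_trans hi (hXle i ω)) hvi) (lt_irrefl _)
  have hFc_eq : ∀ ω, Fc ω = if (∃ i, τ ≤ X i ω ∧ X i ω < τ') then 1 else 0 := by
    intro ω
    have hiff : (∃ i : ↥L, τ ≤ X i.1 ω ∧ X i.1 ω < τ') ↔ (∃ i, τ ≤ X i ω ∧ X i ω < τ') := by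
      constructor
      · rintro ⟨i, h⟩; exact ⟨i, h⟩
      · rintro ⟨i, h1, h2⟩
        have hXv : X i ω = v i := by
          rcases hBer i ω with h | h
          · exact h
          · rw [h] at h1; exact absurd (lt_of_le_of_lt h1 hτpos) (lt_irrefl _)
        refine ⟨⟨i, ?_⟩, h1, h2⟩
        rw [hL, Finset.mem_filter]
        exact ⟨Finset.mem_univ _, hXv ▸ h1, hXv ▸ h2⟩
    have : Fc ω = if (∃ i : ↥L, τ ≤ X i.1 ω ∧ X i.1 ω < τ') then (1:ℝ) else 0 := rfl
    rw [this, if_congr hiff rfl rfl]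
  have hkey : ∀ ω, τ * Fc ω + (1 - Fc ω) * pick (fun i => X i ω) τ'
      ≤ pick (fun i => X i ω) τ := by
    intro ω
    rw [hFc_eq ω]
    by_cases hA : ∃ i, τ ≤ X i ω ∧ X i ω < τ'
    · rw [if_pos hA]
      obtain ⟨i, hi1, hi2⟩ := hA
      have h1 := pick_ge (u := fun i => X i ω) (t := τ) ⟨i, hi1⟩
      have h2 := hpick_nonneg τ' ω
      simp only [mul_one, sub_self, zero_mul, add_zero]
      exact h1
    · rw [if_neg hA]
      have heq : pick (fun i => X i ω) τ = pick (fun i => X i ω) τ' := by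
        refine pick_congr (fun i => ?_) (fun i _ => rfl)
        constructor
        · intro h
          by_contra h'
          exact hA ⟨i, h, not_le.1 h'⟩
        · intro h; exact le_trans hττ' h
      rw [heq]
      simp
  have hFc01 : ∀ ω, Fc ω = 0 ∨ Fc ω = 1 := by
    intro ω; rw [hFc_eq ω]; split
    · exact Or.inr rfl
    · exact Or.inl rfl
  have hIntFc : Integrable Fc μ := by
    refine Integrable.mono' (integrable_const 1) hmFc.aestronglyMeasurable
      (ae_of_all _ fun ω => ?_)
    rcases hFc01 ω with h | h <;> simp [h]
  have hIntProd : Integrable (fun ω => (1 - Fc ω) * pick (fun i => X i ω) τ') μ := by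
    refine Integrable.mono' (integrable_const C)
      (((measurable_const.sub hmFc).mul (hmeasp τ')).aestronglyMeasurable)
      (ae_of_all _ fun ω => ?_)
    rcases hFc01 ω with h | h
    · rw [h]
      simpa [Real.norm_eq_abs, abs_of_nonneg (hpick_nonneg τ' ω)] using hpick_le τ' ω
    · rw [h]; simpa using hC0
  set q : ℝ := ∫ ω, Fc ω ∂μ with hq
  have hq0 : 0 ≤ q := integral_nonneg fun ω => by rcases hFc01 ω with h|h <;> simp [h]
  have hq1 : q ≤ 1 := by
    have := integral_mono hIntFc (integrable_const 1)
      (fun ω => by rcases hFc01 ω with h|h <;> simp [h])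
    simpa using this
  have hindep2 : IndepFun (fun ω => 1 - Fc ω) Gc μ := by
    have h := hindepFG.comp (φ := fun x : ℝ => 1 - x) (ψ := id)
      (measurable_const.sub measurable_id) measurable_id
    exact h
  have hmul : ∫ ω, (1 - Fc ω) * Gc ω ∂μ = (∫ ω, (1 - Fc ω) ∂μ) * (∫ ω, Gc ω ∂μ) := by
    have h := hindep2.integral_mul_eq_mul_integral
      ((measurable_const.sub hmFc).aestronglyMeasurable) hmGc.aestronglyMeasurable
    simpa [Pi.mul_apply] using h
  have hGcInt_eq : ∫ ω, Gc ω ∂μ = TAL μ X τ' := by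
    rw [TAL]
    exact integral_congr_ae (ae_of_all _ fun ω => (hGc_eq ω).symm)
  have hsub : ∫ ω, (1 - Fc ω) ∂μ = 1 - q := by
    rw [integral_sub (integrable_const 1) hIntFc, integral_const]
    simp [hq]
  have hmain : τ * q + (1 - q) * TAL μ X τ' ≤ TAL μ X τ := by
    have hle : ∫ ω, (τ * Fc ω + (1 - Fc ω) * pick (fun i => X i ω) τ') ∂μ ≤ TAL μ X τ := by
      rw [TAL]
      exact integral_mono (Integrable.add (hIntFc.const_mul τ) hIntProd) (hIntPick τ) hkey
    have heval : ∫ ω, (τ * Fc ω + (1 - Fc ω) * pick (fun i => X i ω) τ') ∂μ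
        = τ * q + (1 - q) * TAL μ X τ' := by
      rw [integral_add (hIntFc.const_mul τ) hIntProd, integral_const_mul]
      have hcg : ∫ ω, (1 - Fc ω) * pick (fun i => X i ω) τ' ∂μ
          = ∫ ω, (1 - Fc ω) * Gc ω ∂μ :=
        integral_congr_ae (ae_of_all _ fun ω => congrArg (fun z => (1 - Fc ω) * z) (hGc_eq ω))
      rw [hcg, hmul, hsub, hGcInt_eq]
    rw [← heval]; exact hle
  show TAL μ X τ' ≤ TAL μ X τ
  by_cases hq : q = 1
  · rw [hq] at hmain; linarith
  · have h1q : 0 < 1 - q := by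
      have : q < 1 := lt_of_le_of_ne hq1 hq
      linarith
    have hbτ : TAL μ X τ' < τ := by
      have hlt : (1 - q) * TAL μ X τ' < (1 - q) * τ := by nlinarith [hmain, hTALτ]
      exact (mul_lt_mul_iff_right₀ h1q).1 hlt
    linarith [mul_le_mul_of_nonneg_right hbτ.le hq0, hmain]
end

section
/- Let X = (X_1, …, X_n) be an instance of independent nonnegative random variables with atomless distributions and integrable maximum M, let τ̄ be a 3/4-threshold for X (i.e. E[M·1{M ≥ τ̄}] = (3/4)·E[M]), and suppose p = P(M ≥ τ̄) ∈ (0,1). Then TAL(X, τ̄) ≥ ((4p² − 6p + 3)/(4(1−p)))·OPT(X); this ratio equals 1/2 if and only if p = 1/2, and is strictly greater than 1/2 for every other p ∈ (0,1). -/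
open MeasureTheory ProbabilityTheory

/-- Decomposition of `pick`: it equals the threshold on the event that some value clears
the threshold, plus for each index the excess over the threshold on the event that all
earlier values are below the threshold. -/
lemma pick_decomp {n : ℕ} (v : Fin n → ℝ) (t : ℝ) :
    pick v t = (if ∃ i, t ≤ v i then t else 0)
      + ∑ i : Fin n, (if ∀ j, j < i → v j < t then max (v i - t) 0 else 0) := by
  unfold pick
  by_cases h : (Finset.univ.filter (fun i => t ≤ v i)).Nonempty
  · rw [dif_pos h]
    set S := Finset.univ.filter (fun i => t ≤ v i) with hS
    set i0 := S.min' h with hi0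
    have hi0S : i0 ∈ S := S.min'_mem h
    have hti0 : t ≤ v i0 := by
      have := Finset.mem_filter.1 hi0S; exact this.2
    have hlt : ∀ j, j < i0 → v j < t := by
      intro j hj
      by_contra hc
      push_neg at hc
      have hjS : j ∈ S := Finset.mem_filter.2 ⟨Finset.mem_univ _, hc⟩
      exact absurd (S.min'_le j hjS) (not_le.2 hj)
    rw [if_pos ⟨i0, hti0⟩]
    rw [Finset.sum_eq_single_of_mem i0 (Finset.mem_univ _)]
    · rw [if_pos hlt, max_eq_left (by linarith)]; ring
    · intro j _ hji
      rcases lt_or_gt_of_ne hji with hj | hj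
      · rw [if_pos (fun k hk => hlt k (hk.trans hj)), max_eq_right (by linarith [hlt j hj])]
      · rw [if_neg]
        push_neg
        exact ⟨i0, hj, hti0⟩
  · rw [dif_neg h]
    have hall : ∀ i, v i < t := by
      intro i
      by_contra hc
      push_neg at hc
      exact h ⟨i, Finset.mem_filter.2 ⟨Finset.mem_univ _, hc⟩⟩
    rw [if_neg (by push_neg; exact fun i => hall i)]
    rw [Finset.sum_eq_zero, add_zero]
    intro j _
    split
    · rw [max_eq_right (by linarith [hall j])]
    · rfl

/-- Robustness at `α = 0`, parametrized by `p = P(M ≥ τ̄)`: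
`TAL(X, τ̄) ≥ ((4p² − 6p + 3)/(4(1−p)))·OPT(X)`; the ratio equals `1/2` iff `p = 1/2`
and is strictly larger for every other `p ∈ (0,1)`. -/
theorem stmt8 {Ω : Type*} [MeasurableSpace Ω] (μ : Measure Ω) [IsProbabilityMeasure μ]
    {n : ℕ} (X : Fin n → Ω → ℝ)
    (hmeas : ∀ i, Measurable (X i))
    (hindep : iIndepFun X μ)
    (hnonneg : ∀ i ω, 0 ≤ X i ω)
    (hatomless : ∀ i (x : ℝ), μ {ω | X i ω = x} = 0)
    (hint : Integrable (instMax X) μ)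
    (τ : ℝ) (hτ : 0 ≤ τ)
    (hthr : (∫ ω in {ω | τ ≤ instMax X ω}, instMax X ω ∂μ) = (3 / 4) * OPT μ X)
    (p : ℝ) (hp : p = (μ {ω | τ ≤ instMax X ω}).toReal)
    (hp01 : p ∈ Set.Ioo (0 : ℝ) 1) :
    TAL μ X τ ≥ ((4 * p ^ 2 - 6 * p + 3) / (4 * (1 - p))) * OPT μ X ∧
    ((4 * p ^ 2 - 6 * p + 3) / (4 * (1 - p)) = 1 / 2 ↔ p = 1 / 2) ∧
    (p ≠ 1 / 2 → 1 / 2 < (4 * p ^ 2 - 6 * p + 3) / (4 * (1 - p))) := by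
  obtain ⟨hp0, hp1⟩ := hp01
  have hden : (0:ℝ) < 4 * (1 - p) := by linarith
  refine ⟨?_, ?_, ?_⟩
  case refine_2 =>
    rw [div_eq_iff (ne_of_gt hden)]
    constructor
    · intro h; nlinarith [sq_nonneg (2 * p - 1)]
    · intro h; rw [h]; ring
  case refine_3 =>
    intro hne
    rw [lt_div_iff₀ hden]
    have h2 : (2 * p - 1) ≠ 0 := fun h => hne (by linarith)
    nlinarith [sq_pos_of_ne_zero h2]
  -- main inequality
  rcases Nat.eq_zero_or_pos n with hn | hn
  · exfalso
    subst hn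
    have hM0 : ∀ ω, instMax X ω = 0 := fun ω => Real.iSup_of_isEmpty _
    by_cases hτ0 : τ ≤ 0
    · have hE : {ω | τ ≤ instMax X ω} = Set.univ := by
        ext ω; simp [hM0 ω, hτ0]
      rw [hE, measure_univ] at hp
      simp at hp
      linarith
    · have hE : {ω | τ ≤ instMax X ω} = ∅ := by
        ext ω; simp [hM0 ω, hτ0]
      rw [hE, measure_empty] at hp
      simp at hp
      linarith
  haveI hneFin : Nonempty (Fin n) := ⟨⟨0, hn⟩⟩
  set M := instMax X with hM
  set E := {ω | τ ≤ M ω} with hE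
  have hMeq : ∀ ω, M ω = Finset.univ.sup' Finset.univ_nonempty (fun i => X i ω) := fun ω =>
    (Finset.sup'_univ_eq_ciSup _).symm
  have hMmeas : Measurable M := by
    have h1 : M = Finset.univ.sup' Finset.univ_nonempty X := by
      funext ω
      rw [hMeq ω, Finset.sup'_apply]
    rw [h1]
    exact Finset.measurable_sup' _ (fun i _ => hmeas i)
  have hMexists : ∀ ω, ∃ i, M ω = X i ω := by
    intro ω
    obtain ⟨i, -, hi⟩ := Finset.exists_mem_eq_sup' Finset.univ_nonempty (fun i => X i ω)
    exact ⟨i, (hMeq ω).trans hi⟩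
  have hXle : ∀ i ω, X i ω ≤ M ω := by
    intro i ω
    rw [hMeq ω]
    exact Finset.le_sup' (f := fun j => X j ω) (Finset.mem_univ i)
  have hMnn : ∀ ω, 0 ≤ M ω := fun ω =>
    le_trans (hnonneg (Classical.arbitrary _) ω) (hXle _ ω)
  have hEmeas : MeasurableSet E := measurableSet_le measurable_const hMmeas
  have hEiff : ∀ ω, ω ∈ E ↔ ∃ i, τ ≤ X i ω := by
    intro ω
    constructor
    · intro hω
      obtain ⟨i, hi⟩ := hMexists ω
      exact ⟨i, hi ▸ hω⟩
    · rintro ⟨i, hi⟩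
      exact le_trans hi (hXle i ω)
  set B : Fin n → Set Ω := fun i => {ω | ∀ j, j < i → X j ω < τ} with hB
  set f : Fin n → Ω → ℝ := fun i ω => max (X i ω - τ) 0 with hf
  have hfmeas : ∀ i, Measurable (f i) := fun i =>
    ((hmeas i).sub measurable_const).max measurable_const
  have hfint : ∀ i, Integrable (f i) μ := by
    intro i
    refine hint.mono (hfmeas i).aestronglyMeasurable (ae_of_all _ fun ω => ?_)
    rw [Real.norm_eq_abs, Real.norm_eq_abs, abs_of_nonneg (le_max_right _ _),
      abs_of_nonneg (hMnn ω)]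
    exact max_le (by linarith [hXle i ω]) (hMnn ω)
  have hBmeas : ∀ i, MeasurableSet (B i) := by
    intro i
    have h1 : B i = ⋂ j, ⋂ (_ : j < i), {ω | X j ω < τ} := by
      ext ω; simp [hB, Set.mem_iInter]
    rw [h1]
    exact MeasurableSet.iInter fun j => MeasurableSet.iInter fun _ =>
      measurableSet_lt (hmeas j) measurable_const
  have hpick : ∀ ω, pick (fun i => X i ω) τ
      = E.indicator (fun _ => τ) ω + ∑ i, (B i).indicator (f i) ω := by
    intro ω
    rw [pick_decomp]
    congr 1
    · by_cases hω : ω ∈ E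
      · rw [Set.indicator_of_mem hω, if_pos ((hEiff ω).1 hω)]
      · rw [Set.indicator_of_notMem hω, if_neg (fun hc => hω ((hEiff ω).2 hc))]
    · refine Finset.sum_congr rfl fun i _ => ?_
      by_cases hω : ω ∈ B i
      · rw [Set.indicator_of_mem hω, if_pos (show ∀ j, j < i → X j ω < τ from hω)]
      · rw [Set.indicator_of_notMem hω,
          if_neg (show ¬∀ j, j < i → X j ω < τ from fun h => hω h)]
  have hIndE : Integrable (E.indicator fun _ => τ) μ := (integrable_const τ).indicator hEmeas
  have hIndB : ∀ i, Integrable ((B i).indicator (f i)) μ := fun i =>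
    (hfint i).indicator (hBmeas i)
  have hTAL : TAL μ X τ
      = (μ E).toReal * τ + ∑ i, ∫ ω, (B i).indicator (f i) ω ∂μ := by
    unfold TAL
    calc ∫ ω, pick (fun i => X i ω) τ ∂μ
        = ∫ ω, (E.indicator (fun _ => τ) ω + ∑ i, (B i).indicator (f i) ω) ∂μ := by
          exact integral_congr_ae (ae_of_all _ hpick)
      _ = ∫ ω, E.indicator (fun _ => τ) ω ∂μ
            + ∫ ω, ∑ i, (B i).indicator (f i) ω ∂μ :=
          integral_add hIndE (integrable_finset_sum _ fun i _ => hIndB i)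
      _ = (μ E).toReal * τ + ∑ i, ∫ ω, (B i).indicator (f i) ω ∂μ := by
          rw [integral_finset_sum _ (fun i _ => hIndB i), integral_indicator_const τ hEmeas,
            smul_eq_mul, measureReal_def]
  have hprod : ∀ i, ∫ ω, (B i).indicator (f i) ω ∂μ
      = (μ (B i)).toReal * ∫ ω, f i ω ∂μ := by
    intro i
    set S : Finset (Fin n) := Finset.univ.filter (fun j => j < i) with hS
    set T : Finset (Fin n) := {i} with hT
    have hST : Disjoint S T := by
      rw [Finset.disjoint_left]
      intro j hjS hjT
      rw [hS, Finset.mem_filter] at hjS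
      rw [hT, Finset.mem_singleton] at hjT
      exact absurd hjS.2 (hjT ▸ lt_irrefl i)
    have hIF := hindep.indepFun_finset S T hST hmeas
    set A : Set (↥S → ℝ) := {v | ∀ j, v j < τ} with hA
    have hAmeas : MeasurableSet A := by
      have h1 : A = ⋂ j, {v : ↥S → ℝ | v j < τ} := by
        ext v; simp [hA, Set.mem_iInter]
      rw [h1]
      exact MeasurableSet.iInter fun j =>
        measurableSet_lt (measurable_pi_apply j) measurable_const
    set φ : (↥S → ℝ) → ℝ := A.indicator (fun _ => 1) with hφdef
    have hφ : Measurable φ := measurable_const.indicator hAmeas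
    set ψ : (↥T → ℝ) → ℝ := fun w => max (w ⟨i, Finset.mem_singleton_self i⟩ - τ) 0 with hψdef
    have hψ : Measurable ψ :=
      ((measurable_pi_apply _).sub measurable_const).max measurable_const
    have hc := hIF.comp hφ hψ
    have h1 : (φ ∘ fun a (j : ↥S) => X j a) = (B i).indicator (fun _ => (1:ℝ)) := by
      funext ω
      by_cases hω : ω ∈ B i
      · have hmem : (fun j : ↥S => X j ω) ∈ A := by
          intro j
          exact hω j.1 (Finset.mem_filter.mp j.2).2
        simp only [Function.comp_apply, hφdef, Set.indicator_of_mem hmem,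
          Set.indicator_of_mem hω]
      · have hmem : (fun j : ↥S => X j ω) ∉ A := by
          intro hc'
          apply hω
          intro j hj
          exact hc' ⟨j, Finset.mem_filter.mpr ⟨Finset.mem_univ _, hj⟩⟩
        simp only [Function.comp_apply, hφdef, Set.indicator_of_notMem hmem,
          Set.indicator_of_notMem hω]
    have h2 : (ψ ∘ fun a (j : ↥T) => X j a) = f i := rfl
    rw [h1, h2] at hc
    have h3 : (B i).indicator (f i) = ((B i).indicator (fun _ => (1:ℝ))) * (f i) := by
      funext ω
      by_cases hω : ω ∈ B i <;>
        simp [Set.indicator_of_mem, Set.indicator_of_notMem, hω]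
    have h4 := (show IndepFun ((B i).indicator (fun _ => (1:ℝ))) (f i) μ from hc).integral_mul_eq_mul_integral
      ((integrable_const (1:ℝ)).indicator (hBmeas i)).aestronglyMeasurable (hfint i).aestronglyMeasurable
    calc ∫ ω, (B i).indicator (f i) ω ∂μ
        = ∫ ω, ((B i).indicator (fun _ => (1:ℝ)) * f i) ω ∂μ := by rw [← h3]
      _ = (∫ ω, (B i).indicator (fun _ => (1:ℝ)) ω ∂μ) * ∫ ω, f i ω ∂μ := h4
      _ = (μ (B i)).toReal * ∫ ω, f i ω ∂μ := by
          rw [integral_indicator_const (1:ℝ) (hBmeas i), smul_eq_mul, mul_one, measureReal_def]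
  have hEc : (μ Eᶜ).toReal = 1 - p := by
    rw [prob_compl_eq_one_sub hEmeas,
      ENNReal.toReal_sub_of_le prob_le_one ENNReal.one_ne_top, ENNReal.toReal_one, hp]
  have hBlb : ∀ i, 1 - p ≤ (μ (B i)).toReal := by
    intro i
    have hsub : Eᶜ ⊆ B i := by
      intro ω hω j _
      exact lt_of_le_of_lt (hXle j ω) (not_le.1 (by exact hω))
    have h1 : (μ Eᶜ).toReal ≤ (μ (B i)).toReal :=
      ENNReal.toReal_mono (measure_ne_top μ _) (measure_mono hsub)
    linarith [hEc ▸ h1]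
  have hcnn : ∀ i, 0 ≤ ∫ ω, f i ω ∂μ := fun i =>
    integral_nonneg fun ω => le_max_right _ _
  have hgmeas : Measurable (fun ω => max (M ω - τ) 0) :=
    (hMmeas.sub measurable_const).max measurable_const
  have hgint : Integrable (fun ω => max (M ω - τ) 0) μ := by
    refine hint.mono hgmeas.aestronglyMeasurable (ae_of_all _ fun ω => ?_)
    rw [Real.norm_eq_abs, Real.norm_eq_abs, abs_of_nonneg (le_max_right _ _),
      abs_of_nonneg (hMnn ω)]
    exact max_le (by linarith [hMnn ω]) (hMnn ω)
  have hsumf : ∫ ω, max (M ω - τ) 0 ∂μ ≤ ∑ i, ∫ ω, f i ω ∂μ := by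
    rw [← integral_finset_sum _ (fun i _ => hfint i)]
    refine integral_mono hgint (integrable_finset_sum _ fun i _ => hfint i) fun ω => ?_
    obtain ⟨i, hi⟩ := hMexists ω
    calc max (M ω - τ) 0 = f i ω := by rw [hi]
      _ ≤ ∑ j, f j ω := Finset.single_le_sum (f := fun j => f j ω) (fun j _ => le_max_right _ _) (Finset.mem_univ i)
  have hmax_eq : ∫ ω, max (M ω - τ) 0 ∂μ = 3 / 4 * OPT μ X - τ * p := by
    have h1 : (fun ω => max (M ω - τ) 0) = E.indicator (fun ω => M ω - τ) := by
      funext ω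
      by_cases hω : ω ∈ E
      · rw [Set.indicator_of_mem hω, max_eq_left (sub_nonneg.2 (by exact hω))]
      · have hlt : M ω < τ := not_le.1 (by exact hω)
        rw [Set.indicator_of_notMem hω, max_eq_right (by linarith)]
    rw [h1, integral_indicator hEmeas,
      integral_sub hint.integrableOn (integrable_const τ).integrableOn,
      setIntegral_const, smul_eq_mul, hthr, hp, measureReal_def]
    ring
  have hOPTnn : 0 ≤ OPT μ X := integral_nonneg hMnn
  have hOPTeq : ∫ ω, M ω ∂μ = OPT μ X := rfl
  have hcompl : ∫ ω in Eᶜ, M ω ∂μ = OPT μ X - 3 / 4 * OPT μ X := by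
    have h1 := integral_add_compl hEmeas hint
    rw [hthr, hOPTeq] at h1
    linarith
  have hτlb : 1 / 4 * OPT μ X ≤ τ * (1 - p) := by
    have h1 : ∫ ω in Eᶜ, M ω ∂μ ≤ ∫ ω in Eᶜ, τ ∂μ :=
      setIntegral_mono_on hint.integrableOn (integrable_const τ).integrableOn hEmeas.compl
        (fun ω hω => le_of_lt (not_le.1 (by exact hω)))
    rw [setIntegral_const, smul_eq_mul, hcompl, measureReal_def, hEc] at h1
    linarith
  -- assemble
  set C := ∑ i, ∫ ω, f i ω ∂μ with hC
  have hCnn : 0 ≤ C := Finset.sum_nonneg fun i _ => hcnn i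
  have hTALlb : τ * p + (1 - p) * C ≤ TAL μ X τ := by
    rw [hTAL, ← hp]
    have h1 : (1 - p) * C ≤ ∑ i, (μ (B i)).toReal * ∫ ω, f i ω ∂μ := by
      rw [hC, Finset.mul_sum]
      exact Finset.sum_le_sum fun i _ => mul_le_mul_of_nonneg_right (hBlb i) (hcnn i)
    have h2 : ∑ i, ∫ ω, (B i).indicator (f i) ω ∂μ
        = ∑ i, (μ (B i)).toReal * ∫ ω, f i ω ∂μ :=
      Finset.sum_congr rfl fun i _ => hprod i
    rw [h2]
    linarith [mul_comm τ p]
  have hClb : 3 / 4 * OPT μ X - τ * p ≤ C := by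
    rw [← hmax_eq]; exact hsumf
  have k1 : (1 - p) * (3 / 4 * OPT μ X - τ * p) ≤ (1 - p) * C :=
    mul_le_mul_of_nonneg_left hClb (by linarith)
  have k2 : p ^ 2 * (1 / 4 * OPT μ X) ≤ p ^ 2 * (τ * (1 - p)) :=
    mul_le_mul_of_nonneg_left hτlb (sq_nonneg p)
  have k3 : 3 / 4 * (1 - p) * OPT μ X + τ * p ^ 2 ≤ TAL μ X τ := by nlinarith [k1, hTALlb]
  rw [ge_iff_le, div_mul_eq_mul_div, div_le_iff₀ hden]
  nlinarith [k2, mul_le_mul_of_nonneg_right k3 (le_of_lt hden)]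
end

section
/- Let M be a nonnegative integrable real random variable with P(M = τ) = 0 for a threshold τ > 0 satisfying E[M·1{M ≥ τ}] = (3/4)·E[M], and set p = P(M ≥ τ) ∈ (0,1). Then p·τ + (1−p)·E[max(M − τ, 0)] ≥ ((4p² − 6p + 3)/(4(1−p)))·E[M]. In particular τ ≥ E[M]/(4(1−p)) and E[max(M − τ, 0)] = (3/4)·E[M] − τ·P(M > τ). -/
open MeasureTheory ProbabilityTheory

/-- For a nonnegative integrable `M` with `P(M = τ) = 0`, `E[M·1{M ≥ τ}] = (3/4)E[M]`
and `p = P(M ≥ τ) ∈ (0,1)`: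
`p·τ + (1−p)·E[(M−τ)⁺] ≥ ((4p²−6p+3)/(4(1−p)))·E[M]`, with
`τ ≥ E[M]/(4(1−p))` and `E[(M−τ)⁺] = (3/4)E[M] − τ·P(M > τ)`. -/
theorem stmt9 {Ω : Type*} [MeasurableSpace Ω] (μ : Measure Ω) [IsProbabilityMeasure μ]
    (M : Ω → ℝ) (hmeas : Measurable M) (hnonneg : ∀ ω, 0 ≤ M ω)
    (hint : Integrable M μ) (τ : ℝ) (hτ : 0 < τ)
    (hatom : μ {ω | M ω = τ} = 0)
    (hthr : (∫ ω in {ω | τ ≤ M ω}, M ω ∂μ) = (3 / 4) * ∫ ω, M ω ∂μ)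
    (p : ℝ) (hp : p = (μ {ω | τ ≤ M ω}).toReal) (hp01 : p ∈ Set.Ioo (0 : ℝ) 1) :
    p * τ + (1 - p) * (∫ ω, max (M ω - τ) 0 ∂μ)
      ≥ ((4 * p ^ 2 - 6 * p + 3) / (4 * (1 - p))) * ∫ ω, M ω ∂μ ∧
    τ ≥ (∫ ω, M ω ∂μ) / (4 * (1 - p)) ∧
    (∫ ω, max (M ω - τ) 0 ∂μ)
      = (3 / 4) * (∫ ω, M ω ∂μ) - τ * (μ {ω | τ < M ω}).toReal := by
  obtain ⟨hp0, hp1⟩ := hp01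
  have hA : MeasurableSet {ω | τ ≤ M ω} := measurableSet_le measurable_const hmeas
  have hEnn : (0:ℝ) ≤ ∫ ω, M ω ∂μ := integral_nonneg hnonneg
  have hsplit : (∫ ω in {ω | τ ≤ M ω}, M ω ∂μ) + (∫ ω in {ω | τ ≤ M ω}ᶜ, M ω ∂μ)
      = ∫ ω, M ω ∂μ := integral_add_compl hA hint
  have hcomp : (∫ ω in {ω | τ ≤ M ω}ᶜ, M ω ∂μ) = (1/4) * ∫ ω, M ω ∂μ := by
    linarith
  have hμc : (μ {ω | τ ≤ M ω}ᶜ).toReal = 1 - p := by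
    rw [prob_compl_eq_one_sub hA, hp]
    rw [ENNReal.toReal_sub_of_le prob_le_one ENNReal.one_ne_top, ENNReal.toReal_one]
  -- complement bound
  have hbound : (∫ ω in {ω | τ ≤ M ω}ᶜ, M ω ∂μ) ≤ (1 - p) * τ := by
    have h1 : (∫ ω in {ω | τ ≤ M ω}ᶜ, M ω ∂μ) ≤ ∫ _ω in {ω | τ ≤ M ω}ᶜ, τ ∂μ := by
      refine setIntegral_mono_on hint.integrableOn (integrableOn_const (ne_of_lt ?_))
        hA.compl ?_
      · exact measure_lt_top μ _
      · intro ω hω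
        simpa using le_of_lt (by simpa using hω : M ω < τ)
    rw [setIntegral_const, smul_eq_mul, measureReal_def, hμc] at h1
    exact h1
  have hτ4 : τ ≥ (∫ ω, M ω ∂μ) / (4 * (1 - p)) := by
    rw [ge_iff_le, div_le_iff₀ (by nlinarith)]
    nlinarith
  -- max integral identity
  have hμlt : (μ {ω | τ < M ω}).toReal = p := by
    have hsub : {ω | τ ≤ M ω} ⊆ {ω | τ < M ω} ∪ {ω | M ω = τ} := by
      intro ω h
      have h' : τ ≤ M ω := h
      rcases lt_or_eq_of_le h' with h'' | h''
      · exact Or.inl h''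
      · exact Or.inr h''.symm
    have h1 : μ {ω | τ ≤ M ω} ≤ μ {ω | τ < M ω} := by
      calc μ {ω | τ ≤ M ω} ≤ μ ({ω | τ < M ω} ∪ {ω | M ω = τ}) := measure_mono hsub
        _ ≤ μ {ω | τ < M ω} + μ {ω | M ω = τ} := measure_union_le _ _
        _ = μ {ω | τ < M ω} := by rw [hatom, add_zero]
    have h2 : μ {ω | τ < M ω} ≤ μ {ω | τ ≤ M ω} :=
      measure_mono (fun ω h => show τ ≤ M ω from le_of_lt h)
    rw [le_antisymm h2 h1, ← hp]
  have hmaxeq : (∫ ω, max (M ω - τ) 0 ∂μ)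
      = (∫ ω in {ω | τ ≤ M ω}, M ω ∂μ) - p * τ := by
    have heq : (fun ω => max (M ω - τ) 0)
        = {ω | τ ≤ M ω}.indicator (fun ω => M ω - τ) := by
      funext ω
      by_cases h : τ ≤ M ω
      · rw [Set.indicator_of_mem (show ω ∈ {ω' | τ ≤ M ω'} from h)]
        exact max_eq_left (by linarith)
      · push_neg at h
        rw [Set.indicator_of_notMem (show ω ∉ {ω' | τ ≤ M ω'} from not_le.mpr h)]
        exact max_eq_right (by linarith)
    rw [heq, integral_indicator hA]
    have : (∫ ω in {ω | τ ≤ M ω}, (M ω - τ) ∂μ)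
        = (∫ ω in {ω | τ ≤ M ω}, M ω ∂μ) - ∫ _ω in {ω | τ ≤ M ω}, τ ∂μ := by
      refine integral_sub hint.integrableOn (integrableOn_const (ne_of_lt ?_))
      exact measure_lt_top μ _
    rw [this, setIntegral_const, smul_eq_mul, measureReal_def, ← hp, mul_comm]
  have hmax : (∫ ω, max (M ω - τ) 0 ∂μ)
      = (3 / 4) * (∫ ω, M ω ∂μ) - τ * (μ {ω | τ < M ω}).toReal := by
    rw [hmaxeq, hthr, hμlt]; ring
  refine ⟨?_, hτ4, hmax⟩
  rw [ge_iff_le, div_mul_eq_mul_div, div_le_iff₀ (by nlinarith), hmax, hμlt]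
  have h1 : (∫ ω, M ω ∂μ) ≤ 4 * (1 - p) * τ := by
    rw [ge_iff_le, div_le_iff₀ (by nlinarith)] at hτ4
    linarith
  nlinarith [mul_le_mul_of_nonneg_left h1 (sq_nonneg p)]
end

section
/- Let k > 1 and t > 0 be real constants, and define f(x_0, x_1, x_2) = (x_1 + k·x_2·(1−x_1)) / (k·x_2 + (1−x_2)·(1 − (1−x_1)(1−x_0))) for (x_0, x_1, x_2) ∈ [0,1]³. Then for every (x_0, x_1, x_2) ∈ [0,1]³ satisfying the constraint t·x_0(1−x_1)(1−x_2) = k·x_2 + (1−x_2)·x_1 and having positive denominator k·x_2 + (1−x_2)(1 − (1−x_1)(1−x_0)) > 0, it holds that f(x_0, x_1, x_2) ≥ (t/(t+1))·((2k + t + 2k√(t+1))/(k(2 + t + 2√(t+1)))); moreover this lower bound is attained by some feasible point (namely x_0 = 1, x_2 = t/(k + t + k√(t+1)), and x_1 = (t − (k+t)x_2)/((t+1)(1−x_2))). -/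
set_option maxHeartbeats 1000000


open MeasureTheory ProbabilityTheory

lemma key' (k s b c : ℝ) (hk : 1 < k) (hs : 1 < s) (hb0 : 0 ≤ b)
    (hc0 : 0 ≤ c) (hc1 : c ≤ 1)
    (hQ : k*c + b*(1-c) ≤ (s^2-1)*(1-b)*(1-c)) :
    (2*k+s-1)*(k*c+b*(1-c)) ≤ k*(s+1)*(b + k*c*(1-b)) := by
  set P := k*(s+1)*(b + k*c*(1-b)) - (2*k+s-1)*(k*c+b*(1-c)) with hP
  suffices h : 0 ≤ P by linarith
  have hQ' : 0 ≤ (s^2-1)*(1-b)*(1-c) - (k*c + b*(1-c)) := by linarith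
  set D := k^2*(s+1) - (2*k+s-1) with hD
  rcases le_or_gt (D*c) ((k-1)*(s-1)) with hcase | hcase
  · have hb : 0 ≤ b*((k-1)*(s-1)-D*c) := mul_nonneg hb0 (by linarith)
    have : P = k*c*((k-1)*(s-1)) + b*((k-1)*(s-1)-D*c) := by rw [hP, hD]; ring
    nlinarith [mul_nonneg (mul_nonneg (le_of_lt (lt_trans one_pos hk)) hc0)
      (mul_nonneg (by linarith : (0:ℝ) ≤ k-1) (by linarith : (0:ℝ) ≤ s-1))]
  · have hc1' : c < 1 := by
      by_contra h
      push_neg at h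
      have : c = 1 := le_antisymm hc1 h
      rw [this] at hQ'
      nlinarith
    have hid : P * (s^2*(1-c)) = ((s^2-1)*(1-b)*(1-c) - (k*c + b*(1-c))) * (D*c - (k-1)*(s-1))
        + (s+1)*(k-1)*((k+s-1)*(1-c)-k)^2 := by rw [hP, hD]; ring
    have hpos : 0 < s^2*(1-c) := mul_pos (by nlinarith) (by linarith)
    nlinarith [mul_nonneg hQ' (by linarith : (0:ℝ) ≤ D*c - (k-1)*(s-1)),
      mul_nonneg (mul_nonneg (by linarith : (0:ℝ) ≤ s+1) (by linarith : (0:ℝ) ≤ k-1))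
        (sq_nonneg ((k+s-1)*(1-c)-k))]

/-- The reduced optimization problem: for `k > 1`, `t > 0`, on the feasible set in
`[0,1]³` with positive denominator, the objective is at least
`(t/(t+1))·((2k + t + 2k√(t+1))/(k(2 + t + 2√(t+1))))`, and this bound is attained at
`x₀ = 1`, `x₂ = t/(k + t + k√(t+1))`, `x₁ = (t − (k+t)x₂)/((t+1)(1−x₂))`. -/
theorem stmt12 (k t : ℝ) (hk : 1 < k) (ht : 0 < t) :
    (∀ x₀ x₁ x₂ : ℝ, x₀ ∈ Set.Icc (0 : ℝ) 1 → x₁ ∈ Set.Icc (0 : ℝ) 1 →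
      x₂ ∈ Set.Icc (0 : ℝ) 1 →
      t * (x₀ * (1 - x₁) * (1 - x₂)) = k * x₂ + (1 - x₂) * x₁ →
      0 < k * x₂ + (1 - x₂) * (1 - (1 - x₁) * (1 - x₀)) →
      (x₁ + k * x₂ * (1 - x₁)) / (k * x₂ + (1 - x₂) * (1 - (1 - x₁) * (1 - x₀)))
        ≥ (t / (t + 1)) * ((2 * k + t + 2 * k * Real.sqrt (t + 1)) /
            (k * (2 + t + 2 * Real.sqrt (t + 1))))) ∧
    (∃ x₀ x₁ x₂ : ℝ, x₀ = 1 ∧ x₂ = t / (k + t + k * Real.sqrt (t + 1)) ∧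
      x₁ = (t - (k + t) * x₂) / ((t + 1) * (1 - x₂)) ∧
      x₀ ∈ Set.Icc (0 : ℝ) 1 ∧ x₁ ∈ Set.Icc (0 : ℝ) 1 ∧ x₂ ∈ Set.Icc (0 : ℝ) 1 ∧
      t * (x₀ * (1 - x₁) * (1 - x₂)) = k * x₂ + (1 - x₂) * x₁ ∧
      0 < k * x₂ + (1 - x₂) * (1 - (1 - x₁) * (1 - x₀)) ∧
      (x₁ + k * x₂ * (1 - x₁)) / (k * x₂ + (1 - x₂) * (1 - (1 - x₁) * (1 - x₀)))
        = (t / (t + 1)) * ((2 * k + t + 2 * k * Real.sqrt (t + 1)) /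
            (k * (2 + t + 2 * Real.sqrt (t + 1))))) := by
  
  set s := Real.sqrt (t + 1) with hsdef
  have hs1 : 1 < s := by
    rw [hsdef]
    nlinarith [Real.sq_sqrt (show (0:ℝ) ≤ t+1 by linarith), Real.sqrt_nonneg (t+1)]
  have hs0 : 0 < s := by linarith
  have hts : t = s^2 - 1 := by
    rw [hsdef, Real.sq_sqrt (show (0:ℝ) ≤ t+1 by linarith)]; ring
  have hk0 : 0 < k := by linarith
  have hks : 0 < k + s - 1 := by linarith
  clear_value s
  have hB : (t / (t + 1)) * ((2 * k + t + 2 * k * s) / (k * (2 + t + 2 * s)))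
      = (s-1)*(2*k+s-1)/(k*s^2) := by
    rw [hts, div_mul_div_comm,
      div_eq_div_iff (ne_of_gt (by
        nlinarith [mul_pos (mul_pos hk0 (mul_pos hs0 hs0))
          (mul_pos (show (0:ℝ) < s+1 by linarith) (show (0:ℝ) < s+1 by linarith))]))
        (by positivity)]
    ring
  constructor
  · intro x₀ x₁ x₂ h0 h1 h2 hcon hden
    obtain ⟨h00, h01⟩ := h0
    obtain ⟨h10, h11⟩ := h1
    obtain ⟨h20, h21⟩ := h2
    set G := k * x₂ + (1 - x₂) * x₁ with hG
    set Dd := k * x₂ + (1 - x₂) * (1 - (1 - x₁) * (1 - x₀)) with hDd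
    have hDeq : t * Dd = (t + 1) * G := by
      rw [hDd, hG]; linear_combination hcon
    have hGpos : 0 < G := by nlinarith
    have hQ : k*x₂ + x₁*(1-x₂) ≤ (s^2-1)*(1-x₁)*(1-x₂) := by
      have h : x₀ * (1-x₁) * (1-x₂) ≤ (1-x₁)*(1-x₂) := by
        nlinarith [mul_nonneg (by linarith : (0:ℝ) ≤ 1-x₁) (by linarith : (0:ℝ) ≤ 1-x₂)]
      nlinarith
    have hkey := key' k s x₁ x₂ hk hs1 h10 h20 h21 hQ
    rw [ge_iff_le, hB, div_le_div_iff₀ (by positivity) hden]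
    have hDG : (s^2 - 1) * Dd = s^2 * G := by
      rw [hts] at hDeq; linarith [hDeq]
    have h2 : (s^2-1)*((2*k+s-1)*Dd) ≤ s^2*(k*(s+1)*(x₁ + k*x₂*(1-x₁))) := by
      have hm := mul_le_mul_of_nonneg_left hkey (sq_nonneg s)
      calc (s^2-1)*((2*k+s-1)*Dd) = (2*k+s-1)*(s^2*G) := by
              linear_combination (2*k+s-1) * hDG
        _ = s^2*((2*k+s-1)*(k*x₂+x₁*(1-x₂))) := by rw [hG]; ring
        _ ≤ s^2*(k*(s+1)*(x₁ + k*x₂*(1-x₁))) := hm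
    have h3 : (s+1) * ((s-1)*(2*k+s-1)*Dd) ≤ (s+1) * ((x₁ + k*x₂*(1-x₁))*(k*s^2)) := by
      nlinarith [h2]
    exact le_of_mul_le_mul_left h3 (by linarith)
  · have hden0 : 0 < k + t + k * s := by nlinarith
    have hc_eq : t / (k + t + k * s) = (s-1)/(k+s-1) := by
      rw [div_eq_div_iff (ne_of_gt hden0) (ne_of_gt hks), hts]
      ring
    have hc0 : (0:ℝ) ≤ (s-1)/(k+s-1) := div_nonneg (by linarith) (by linarith)
    have hc1 : (s-1)/(k+s-1) < 1 := by
      rw [div_lt_one hks]; linarith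
    have hb_eq : (t - (k + t) * (t / (k + t + k * s))) / ((t + 1) * (1 - t / (k + t + k * s)))
        = (s-1)/s := by
      rw [hc_eq, hts]
      have h1 : (k+s-1) ≠ 0 := ne_of_gt hks
      have h2 : s ≠ 0 := ne_of_gt hs0
      rw [div_eq_div_iff ?_ h2]
      · field_simp
        ring
      · have : 1 - (s-1)/(k+s-1) = k/(k+s-1) := by field_simp; ring
        rw [this]
        have : (0:ℝ) < (s^2-1+1) * (k/(k+s-1)) :=
          mul_pos (by nlinarith) (div_pos hk0 hks)
        exact ne_of_gt this
    have e1 : (1:ℝ) - (s-1)/(k+s-1) = k/(k+s-1) := by field_simp; ring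
    have hb0' : (0:ℝ) ≤ (s-1)/s := div_nonneg (by linarith) (by linarith)
    have hb1' : (s-1)/s ≤ 1 := by
      rw [div_le_one hs0]; linarith
    refine ⟨1, (t - (k + t) * (t / (k + t + k * s))) / ((t + 1) * (1 - t / (k + t + k * s))),
      t / (k + t + k * s), rfl, rfl, rfl, ⟨by norm_num, le_refl 1⟩, ?_, ?_, ?_, ?_, ?_⟩
    · rw [hb_eq]; exact ⟨hb0', hb1'⟩
    · rw [hc_eq]; exact ⟨hc0, le_of_lt hc1⟩
    · rw [hb_eq, hc_eq, hts]
      have h1 : (k+s-1) ≠ 0 := ne_of_gt hks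
      have h2 : s ≠ 0 := ne_of_gt hs0
      field_simp
      ring
    · rw [hb_eq, hc_eq]
      norm_num
      have h1 : (k+s-1) ≠ 0 := ne_of_gt hks
      have hDv : k*((s-1)/(k+s-1)) + (1 - (s-1)/(k+s-1)) = k*s/(k+s-1) := by
        field_simp; ring
      nlinarith [hDv, div_pos (mul_pos hk0 hs0) hks]
    · rw [hb_eq, hc_eq, hB]
      norm_num
      have h1 : (k+s-1) ≠ 0 := ne_of_gt hks
      have h2 : s ≠ 0 := ne_of_gt hs0
      have hDv : k*((s-1)/(k+s-1)) + (1 - (s-1)/(k+s-1)) = k*s/(k+s-1) := by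
        field_simp; ring
      have hNv : (s-1)/s + k*((s-1)/(k+s-1))*(1-(s-1)/s) = (s-1)*(2*k+s-1)/(s*(k+s-1)) := by
        field_simp; ring
      rw [hNv, hDv]
      rw [div_div_div_eq]
      rw [div_eq_div_iff (by positivity) (by positivity)]
      ring
end

section
/- Let M be a nonnegative integrable real random variable, let τ > 0 satisfy E[M·1{M ≥ τ}] = (3/4)·E[M], and let α ∈ (0,1]. Then P(M ≥ τ/α) ≤ 1/(1/(3α) + 1) = 3α/(1 + 3α). -/
open MeasureTheory ProbabilityTheory

/-- If `E[M·1{M ≥ τ}] = (3/4)E[M]` for a nonnegative integrable `M` and `τ > 0`, then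
for every `α ∈ (0,1]`, `P(M ≥ τ/α) ≤ 1/(1/(3α) + 1) = 3α/(1 + 3α)`. -/
theorem stmt14 {Ω : Type*} [MeasurableSpace Ω] (μ : Measure Ω) [IsProbabilityMeasure μ]
    (M : Ω → ℝ) (hmeas : Measurable M) (hnonneg : ∀ ω, 0 ≤ M ω)
    (hint : Integrable M μ) (τ : ℝ) (hτ : 0 < τ)
    (hthr : (∫ ω in {ω | τ ≤ M ω}, M ω ∂μ) = (3 / 4) * ∫ ω, M ω ∂μ)
    (α : ℝ) (hα : α ∈ Set.Ioc (0 : ℝ) 1) :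
    (μ {ω | τ / α ≤ M ω}).toReal ≤ 1 / (1 / (3 * α) + 1) ∧
    1 / (1 / (3 * α) + 1) = 3 * α / (1 + 3 * α) := by

  have hα0 : (0:ℝ) < α := hα.1
  have hα1 : α ≤ 1 := hα.2
  constructor
  · set S : Set Ω := {ω | τ / α ≤ M ω} with hSdef
    set T : Set Ω := {ω | τ ≤ M ω} with hTdef
    have hSmeas : MeasurableSet S := measurableSet_le measurable_const hmeas
    have hTmeas : MeasurableSet T := measurableSet_le measurable_const hmeas
    have hττα : τ ≤ τ / α := by
      rw [le_div_iff₀ hα0]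
      nlinarith
    have hST : S ⊆ T := fun ω hω => le_trans hττα hω
    set p : ℝ := (μ S).toReal with hp
    have hp1 : p ≤ 1 := by
      simpa [hp] using ENNReal.toReal_mono (by simp) (prob_le_one (μ := μ) (s := S))
    have hp0 : 0 ≤ p := ENNReal.toReal_nonneg
    -- Step 1: (τ/α) * p ≤ ∫_S M
    have step1 : (τ / α) * p ≤ ∫ ω in S, M ω ∂μ := by
      have : ∫ ω in S, (τ / α) ∂μ ≤ ∫ ω in S, M ω ∂μ := by
        apply setIntegral_mono_on (integrableOn_const (measure_ne_top μ S))
          hint.integrableOn hSmeas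
        intro ω hω
        exact hω
      have h' : τ / α * μ.real S ≤ ∫ ω in S, M ω ∂μ := by simpa [mul_comm] using this
      exact h'
    -- Step 2: ∫_S M ≤ ∫_T M
    have step2 : ∫ ω in S, M ω ∂μ ≤ ∫ ω in T, M ω ∂μ := by
      apply setIntegral_mono_set hint.integrableOn
        (Filter.Eventually.of_forall fun ω => hnonneg ω) (HasSubset.Subset.eventuallyLE hST)
    -- split: E[M] = ∫_T M + ∫_Tᶜ M
    have hsplit : (∫ ω, M ω ∂μ) = (∫ ω in T, M ω ∂μ) + ∫ ω in Tᶜ, M ω ∂μ := by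
      rw [← integral_add_compl hTmeas hint]
    have hquarter : (∫ ω in Tᶜ, M ω ∂μ) = (1/4) * ∫ ω, M ω ∂μ := by
      have := hthr
      rw [hsplit]
      rw [hthr] at hsplit ⊢
      linarith [hsplit]
    -- ∫_Tᶜ M ≤ τ * μ(Tᶜ)
    have step3 : (∫ ω in Tᶜ, M ω ∂μ) ≤ τ * (μ Tᶜ).toReal := by
      have : ∫ ω in Tᶜ, M ω ∂μ ≤ ∫ ω in Tᶜ, τ ∂μ := by
        apply setIntegral_mono_on hint.integrableOn
          (integrableOn_const (measure_ne_top μ Tᶜ)) hTmeas.compl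
        intro ω hω
        exact le_of_lt (not_le.mp hω)
      have h' : (∫ ω in Tᶜ, M ω ∂μ) ≤ τ * μ.real Tᶜ := by simpa [mul_comm] using this
      exact h'
    have hcomplS : (μ Sᶜ).toReal = 1 - p := by
      rw [prob_compl_eq_one_sub hSmeas]
      rw [ENNReal.toReal_sub_of_le (prob_le_one) ENNReal.one_ne_top]
      simp [hp]
    have step4 : (μ Tᶜ).toReal ≤ 1 - p := by
      rw [← hcomplS]
      exact ENNReal.toReal_mono (measure_ne_top μ Sᶜ)
        (measure_mono (Set.compl_subset_compl.2 hST))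
    -- combine
    have key : (τ / α) * p ≤ 3 * (τ * (1 - p)) := by
      have h1 : (τ / α) * p ≤ (3/4) * ∫ ω, M ω ∂μ := by
        calc (τ / α) * p ≤ ∫ ω in S, M ω ∂μ := step1
          _ ≤ ∫ ω in T, M ω ∂μ := step2
          _ = (3/4) * ∫ ω, M ω ∂μ := hthr
      have h2 : (1/4) * (∫ ω, M ω ∂μ) ≤ τ * (1 - p) := by
        rw [← hquarter]
        exact step3.trans (by nlinarith [step4])
      linarith
    have hkey2 : p * (1 + 3 * α) ≤ 3 * α := by
      have := mul_le_mul_of_nonneg_left key (le_of_lt hα0)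
      have hτα : α * ((τ / α) * p) = τ * p := by
        field_simp
      nlinarith [this, hτ.le]
    have hpos : (0:ℝ) < 1 / (3 * α) + 1 := by positivity
    rw [le_div_iff₀ hpos]
    have h3α : (0:ℝ) < 3 * α := by linarith
    calc p * (1 / (3 * α) + 1) = (p * (1 + 3 * α)) / (3 * α) := by
          field_simp
      _ ≤ (3 * α) / (3 * α) := by gcongr
      _ = 1 := div_self (ne_of_gt h3α)
  · field_simp
end

section
/- Let X_1, …, X_n (n ≥ 2) be independent real-valued random variables, let M_1 denote the largest and M_2 the second-largest value among X_1, …, X_n (the n-th and (n−1)-th order statistics), and let L_1 > L_2 be fixed real thresholds with P(M_1 > L_1) > 0. Then P(M_2 > L_2 | M_1 > L_1) ≤ P(M_1 > L_2). -/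
open MeasureTheory ProbabilityTheory

/-- Order-statistics bound: for independent `X₁,…,Xₙ` (`n ≥ 2`) with largest value `M₁`
and second-largest value `M₂`, and thresholds `L₁ > L₂` with `P(M₁ > L₁) > 0`,
`P(M₂ > L₂ | M₁ > L₁) ≤ P(M₁ > L₂)`. -/
theorem stmt16 {Ω : Type*} [MeasurableSpace Ω] (μ : Measure Ω) [IsProbabilityMeasure μ]
    {n : ℕ} (hn : 2 ≤ n) (X : Fin n → Ω → ℝ)
    (hmeas : ∀ i, Measurable (X i))
    (hindep : iIndepFun X μ)
    (L₁ L₂ : ℝ) (hL : L₂ < L₁)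
    (hpos : 0 < μ {ω | L₁ < ⨆ i, X i ω}) :
    μ[|{ω | L₁ < ⨆ i, X i ω}]
        {ω | L₂ < ⨆ q : {q : Fin n × Fin n // q.1 ≠ q.2}, min (X q.1.1 ω) (X q.1.2 ω)}
      ≤ μ {ω | L₂ < ⨆ i, X i ω} := by
  classical
  have hne : Nonempty (Fin n) := ⟨⟨0, by omega⟩⟩
  -- abbreviations
  set A := {ω | L₁ < ⨆ i, X i ω} with hA
  set B := {ω | L₂ < ⨆ q : {q : Fin n × Fin n // q.1 ≠ q.2}, min (X q.1.1 ω) (X q.1.2 ω)}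
    with hB
  set C := {ω | L₂ < ⨆ i, X i ω} with hC
  set U : Fin n → Set Ω := fun i => X i ⁻¹' Set.Ioi L₁ with hU
  set N : Fin n → Set Ω := fun k => X k ⁻¹' Set.Iic L₂ with hN
  set K : Fin n → Set Ω := fun k => X k ⁻¹' Set.Iic L₁ with hK
  set S : Fin n → Fin n → Set Ω :=
    fun i k => if k = i then U i else if k < i then K k else Set.univ with hS
  set T : Fin n → Fin n → Set Ω := fun i k => if k = i then U i else N k with hT
  set W : Fin n → Set Ω := fun i => ⋂ k, (if k = i then Set.univ else N k) with hW
  set D : Fin n → Set Ω := fun i => ⋂ k, S i k with hD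
  -- measurability facts
  have hUm : ∀ i, MeasurableSet (U i) := fun i => hmeas i measurableSet_Ioi
  have hNm : ∀ k, MeasurableSet (N k) := fun k => hmeas k measurableSet_Iic
  have hKm : ∀ k, MeasurableSet (K k) := fun k => hmeas k measurableSet_Iic
  have hSm : ∀ i k, MeasurableSet (S i k) := by
    intro i k
    simp only [hS]
    split_ifs
    · exact hUm i
    · exact hKm k
    · exact MeasurableSet.univ
  have hDm : ∀ i, MeasurableSet (D i) := fun i => MeasurableSet.iInter (fun k => hSm i k)
  have hWm : ∀ i, MeasurableSet (W i) := by
    intro i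
    refine MeasurableSet.iInter (fun k => ?_)
    split_ifs
    · exact MeasurableSet.univ
    · exact hNm k
  have hAm : MeasurableSet A := by
    have : A = ⋃ i, U i := by
      ext ω
      simp only [hA, Set.mem_setOf_eq, Set.mem_iUnion, hU, Set.mem_preimage, Set.mem_Ioi]
      exact lt_ciSup_iff (Set.Finite.bddAbove (Set.finite_range _))
    rw [this]; exact MeasurableSet.iUnion (fun i => hUm i)
  have hCm : MeasurableSet C := by
    have : C = ⋃ k, X k ⁻¹' Set.Ioi L₂ := by
      ext ω
      simp only [hC, Set.mem_setOf_eq, Set.mem_iUnion, Set.mem_preimage, Set.mem_Ioi]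
      exact lt_ciSup_iff (Set.Finite.bddAbove (Set.finite_range _))
    rw [this]; exact MeasurableSet.iUnion (fun k => hmeas k measurableSet_Ioi)
  have hneq : Nonempty {q : Fin n × Fin n // q.1 ≠ q.2} := by
    refine ⟨⟨(⟨0, by omega⟩, ⟨1, by omega⟩), ?_⟩⟩
    simp [Fin.ext_iff]
  have hBm : MeasurableSet B := by
    have : B = ⋃ q : {q : Fin n × Fin n // q.1 ≠ q.2},
        {ω | L₂ < min (X q.1.1 ω) (X q.1.2 ω)} := by
      ext ω
      simp only [hB, Set.mem_setOf_eq, Set.mem_iUnion]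
      exact lt_ciSup_iff (Set.Finite.bddAbove (Set.finite_range _))
    rw [this]
    exact MeasurableSet.iUnion (fun q =>
      measurableSet_lt measurable_const ((hmeas _).min (hmeas _)))
  -- comap measurability for independence
  have hcomIoi : ∀ (L : ℝ) (k : Fin n),
      MeasurableSet[(inferInstance : MeasurableSpace ℝ).comap (X k)] (X k ⁻¹' Set.Ioi L) :=
    fun L k => ⟨Set.Ioi L, measurableSet_Ioi, rfl⟩
  have hcomIic : ∀ (L : ℝ) (k : Fin n),
      MeasurableSet[(inferInstance : MeasurableSpace ℝ).comap (X k)] (X k ⁻¹' Set.Iic L) :=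
    fun L k => ⟨Set.Iic L, measurableSet_Iic, rfl⟩
  -- product formulas
  have hDprod : ∀ i, μ (D i) = ∏ k, μ (S i k) := by
    intro i
    refine hindep.meas_iInter (fun k => ?_)
    simp only [hS]
    split_ifs with h1 h2
    · subst h1; exact hcomIoi L₁ k
    · exact hcomIic L₁ k
    · exact MeasurableSet.univ
  have hTprod : ∀ i, μ (⋂ k, T i k) = ∏ k, μ (T i k) := by
    intro i
    refine hindep.meas_iInter (fun k => ?_)
    simp only [hT]
    split_ifs with h1
    · subst h1; exact hcomIoi L₁ k
    · exact hcomIic L₂ k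
  have hCcompl : Cᶜ = ⋂ k, N k := by
    ext ω
    simp only [hC, Set.mem_compl_iff, Set.mem_setOf_eq, not_lt, Set.mem_iInter, hN,
      Set.mem_preimage, Set.mem_Iic]
    rw [← not_lt, lt_ciSup_iff (Set.Finite.bddAbove (Set.finite_range _))]
    push_neg
    rfl
  have hCcprod : μ Cᶜ = ∏ k, μ (N k) := by
    rw [hCcompl]
    exact hindep.meas_iInter (fun k => hcomIic L₂ k)
  -- D i ∩ W i = ⋂ k, T i k
  have hDW : ∀ i, D i ∩ W i = ⋂ k, T i k := by
    intro i
    rw [hD, hW, ← Set.iInter_inter_distrib]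
    refine Set.iInter_congr (fun k => ?_)
    simp only [hS, hT]
    by_cases h1 : k = i
    · simp [h1]
    · rw [if_neg h1, if_neg h1, if_neg h1]
      by_cases h2 : k < i
      · rw [if_pos h2]
        refine Set.inter_eq_self_of_subset_right ?_
        simp only [hN, hK]
        exact Set.preimage_mono (Set.Iic_subset_Iic.mpr hL.le)
      · rw [if_neg h2, Set.univ_inter]
  -- the key product bound
  have hprodle : ∀ i, μ (D i) * μ Cᶜ ≤ μ (D i ∩ W i) := by
    intro i
    rw [hDW i, hTprod i, hDprod i, hCcprod, ← Finset.prod_mul_distrib]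
    refine Finset.prod_le_prod' (fun k _ => ?_)
    by_cases h1 : k = i
    · subst h1
      simp only [hS, hT, if_pos rfl]
      exact mul_le_of_le_one_right zero_le (prob_le_one (μ := μ))
    · simp only [hT, if_neg h1]
      exact mul_le_of_le_one_left zero_le (prob_le_one (μ := μ))
  -- B avoids W i
  have hBW : ∀ i, B ⊆ (W i)ᶜ := by
    intro i ω hω
    have hω' : ∃ q : {q : Fin n × Fin n // q.1 ≠ q.2},
        L₂ < min (X q.1.1 ω) (X q.1.2 ω) := by
      rw [← lt_ciSup_iff (Set.Finite.bddAbove (Set.finite_range _))]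
      exact hω
    obtain ⟨q, hq⟩ := hω'
    have : ∃ j, j ≠ i ∧ L₂ < X j ω := by
      rcases ne_or_eq q.1.1 i with h | h
      · exact ⟨q.1.1, h, lt_of_lt_of_le hq (min_le_left _ _)⟩
      · refine ⟨q.1.2, ?_, lt_of_lt_of_le hq (min_le_right _ _)⟩
        rw [← h]; exact (q.2).symm
    obtain ⟨j, hji, hj⟩ := this
    intro hmem
    have := Set.mem_iInter.mp hmem j
    rw [if_neg hji] at this
    simp only [hN, Set.mem_preimage, Set.mem_Iic] at this
    exact absurd hj (not_lt.mpr this)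
  -- per-index inequality
  have key : ∀ i, μ (D i ∩ B) ≤ μ (D i) * μ C := by
    intro i
    have hsub : μ (D i ∩ B) ≤ μ (D i \ W i) := by
      refine measure_mono ?_
      rw [Set.diff_eq]
      exact Set.inter_subset_inter_right _ (hBW i)
    have hsplit : μ (D i ∩ W i) + μ (D i \ W i) = μ (D i) :=
      measure_inter_add_diff _ (hWm i)
    have hsplit2 : μ (D i) * μ C + μ (D i) * μ Cᶜ = μ (D i) := by
      rw [← mul_add, measure_add_measure_compl hCm, measure_univ, mul_one]
    have hcne : μ (D i) * μ Cᶜ ≠ ⊤ :=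
      ((hprodle i).trans_lt (measure_lt_top μ _)).ne
    have hstep : μ (D i \ W i) + μ (D i) * μ Cᶜ ≤ μ (D i) * μ C + μ (D i) * μ Cᶜ := by
      calc μ (D i \ W i) + μ (D i) * μ Cᶜ
          ≤ μ (D i \ W i) + μ (D i ∩ W i) := add_le_add_right (hprodle i) _
        _ = μ (D i) := by rw [add_comm]; exact hsplit
        _ = μ (D i) * μ C + μ (D i) * μ Cᶜ := hsplit2.symm
    exact hsub.trans ((ENNReal.add_le_add_iff_right hcne).mp hstep)
  -- A is the disjoint union of the D i
  have hAD : A = ⋃ i, D i := by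
    ext ω
    simp only [hA, Set.mem_setOf_eq, Set.mem_iUnion]
    rw [lt_ciSup_iff (Set.Finite.bddAbove (Set.finite_range _))]
    constructor
    · rintro ⟨i, hi⟩
      have hnes : (Finset.univ.filter (fun k => L₁ < X k ω)).Nonempty :=
        ⟨i, by simp [hi]⟩
      set i₀ := (Finset.univ.filter (fun k => L₁ < X k ω)).min' hnes with hi₀
      refine ⟨i₀, Set.mem_iInter.mpr (fun k => ?_)⟩
      simp only [hS]
      by_cases h1 : k = i₀
      · rw [if_pos h1]
        subst h1
        have := Finset.min'_mem _ hnes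
        simp only [Finset.mem_filter] at this
        simpa [hU, Set.mem_preimage, Set.mem_Ioi] using this.2
      · rw [if_neg h1]
        by_cases h2 : k < i₀
        · rw [if_pos h2]
          simp only [hK, Set.mem_preimage, Set.mem_Iic]
          by_contra hcon
          push_neg at hcon
          have hkmem : k ∈ Finset.univ.filter (fun k => L₁ < X k ω) := by
            simp [hcon]
          exact absurd (Finset.min'_le _ _ hkmem) (not_le.mpr h2)
        · rw [if_neg h2]; trivial
    · rintro ⟨i, hi⟩
      have := Set.mem_iInter.mp hi i
      simp only [hS, if_pos rfl, hU, Set.mem_preimage, Set.mem_Ioi] at this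
      exact ⟨i, this⟩
  have hdisj0 : ∀ i j : Fin n, i < j → Disjoint (D i) (D j) := by
    intro i j hlt
    refine Set.disjoint_left.mpr (fun ω hi hj => ?_)
    have h1 := Set.mem_iInter.mp hi i
    simp only [hS, if_pos rfl, hU, Set.mem_preimage, Set.mem_Ioi] at h1
    have h2 := Set.mem_iInter.mp hj i
    simp only [hS] at h2
    rw [if_neg hlt.ne, if_pos hlt] at h2
    simp only [hK, Set.mem_preimage, Set.mem_Iic] at h2
    exact absurd h1 (not_lt.mpr h2)
  have hdisj : Pairwise (Function.onFun Disjoint D) := by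
    intro i j hij
    rcases hij.lt_or_gt with h | h
    · exact hdisj0 i j h
    · exact (hdisj0 j i h).symm
  -- sum everything
  have hABle : μ (A ∩ B) ≤ μ A * μ C := by
    have h1 : A ∩ B = ⋃ i, (D i ∩ B) := by rw [hAD, Set.iUnion_inter]
    have h2 : μ (A ∩ B) = ∑ i, μ (D i ∩ B) := by
      rw [h1, measure_iUnion (fun i j hij => (hdisj hij).mono
        Set.inter_subset_left Set.inter_subset_left)
        (fun i => (hDm i).inter hBm), tsum_fintype]
    have h3 : μ A = ∑ i, μ (D i) := by
      rw [hAD, measure_iUnion hdisj hDm, tsum_fintype]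
    rw [h2, h3, Finset.sum_mul]
    exact Finset.sum_le_sum (fun i _ => key i)
  -- finish with conditional probability
  rw [cond_apply hAm μ B]
  calc (μ A)⁻¹ * μ (A ∩ B) ≤ (μ A)⁻¹ * (μ A * μ C) := mul_le_mul_right hABle _
    _ = ((μ A)⁻¹ * μ A) * μ C := by rw [mul_assoc]
    _ ≤ 1 * μ C := mul_le_mul_left (ENNReal.inv_mul_le_one (μ A)) _
    _ = μ C := one_mul _
end

section
/- For every ε ∈ (0,1) and every p ∈ [0,1], at least one of the following two inequalities holds: p + (1−p)(1 + √ε) ≤ (1/2)·(2 + √ε − ε), or 1 + √ε + (1−ε)p ≤ (3/4 + √ε)·(2 + √ε − ε). Consequently, in the two-variable instance with X_1 = 1 deterministically and X_2 = 1/ε + 1/√ε with probability ε (whose prophet value is OPT = 2 + √ε − ε), any algorithm that selects the first item with probability p when the advice is uninformative cannot simultaneously achieve ratio at least 1/2 when α = 0 and ratio strictly greater than 3/4 + √ε when α = 1. -/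
/-!
Write `s = √ε`, so `ε = s²` and `OPT = 2 + s − s²`. The first inequality holds as soon as
`p ≥ (1 + s)/2`. Below that threshold the left side of the second one is at most
`1 + s + (1 − s²)(1 + s)/2`, which falls short of `(3/4 + s)·OPT` by `5s/4 + 3s²/4 − s³/2 ≥ 0`.
-/

open MeasureTheory ProbabilityTheory

theorem uninformative_value_le_half_opt {s p : ℝ} (hs : 0 ≤ s) (hp : (1 + s) / 2 ≤ p) :
    p + (1 - p) * (1 + s) ≤ 1 / 2 * (2 + s - s ^ 2) := by
  nlinarith [mul_nonneg hs (sub_nonneg.2 hp)]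

theorem exact_value_le_opt_mul {s p : ℝ} (hs0 : 0 ≤ s) (hs1 : s ≤ 1) (hp : p ≤ (1 + s) / 2) :
    1 + s + (1 - s ^ 2) * p ≤ (3 / 4 + s) * (2 + s - s ^ 2) := by
  have hgain : (1 - s ^ 2) * p ≤ (1 - s ^ 2) * ((1 + s) / 2) :=
    mul_le_mul_of_nonneg_left hp (by nlinarith)
  nlinarith [mul_nonneg (mul_nonneg hs0 hs0) (sub_nonneg.2 hs1)]

theorem uninformative_le_half_opt_or_exact_le_opt_mul {s : ℝ} (hs0 : 0 ≤ s) (hs1 : s ≤ 1)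
    (p : ℝ) :
    p + (1 - p) * (1 + s) ≤ 1 / 2 * (2 + s - s ^ 2) ∨
    1 + s + (1 - s ^ 2) * p ≤ (3 / 4 + s) * (2 + s - s ^ 2) := by
  rcases le_or_gt ((1 + s) / 2) p with hp | hp
  · exact Or.inl (uninformative_value_le_half_opt hs0 hp)
  · exact Or.inr (exact_value_le_opt_mul hs0 hs1 hp.le)

theorem stmt18_general (ε : ℝ) (hε : ε ∈ Set.Ioo (0 : ℝ) 1) (p : ℝ) :
    p + (1 - p) * (1 + Real.sqrt ε) ≤ (1 / 2) * (2 + Real.sqrt ε - ε) ∨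
    1 + Real.sqrt ε + (1 - ε) * p ≤ (3 / 4 + Real.sqrt ε) * (2 + Real.sqrt ε - ε) := by
  have key := uninformative_le_half_opt_or_exact_le_opt_mul (Real.sqrt_nonneg ε)
    (Real.sqrt_le_one.2 hε.2.le) p
  rwa [Real.sq_sqrt hε.1.le] at key

/-- For every `ε ∈ (0,1)` and `p ∈ [0,1]`, at least one of the following holds:
`p + (1−p)(1+√ε) ≤ (1/2)(2+√ε−ε)` or `1+√ε+(1−ε)p ≤ (3/4+√ε)(2+√ε−ε)`; hence no
algorithm can be `1/2`-robust and strictly better than `(3/4+√ε)`-consistent on the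
hard two-variable instance. -/
theorem stmt18 (ε : ℝ) (hε : ε ∈ Set.Ioo (0 : ℝ) 1) (p : ℝ) (hp : p ∈ Set.Icc (0 : ℝ) 1) :
    p + (1 - p) * (1 + Real.sqrt ε) ≤ (1 / 2) * (2 + Real.sqrt ε - ε) ∨
    1 + Real.sqrt ε + (1 - ε) * p ≤ (3 / 4 + Real.sqrt ε) * (2 + Real.sqrt ε - ε) :=
  stmt18_general ε hε p
end
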